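/- Let n be an odd positive integer and let (V, μ) be an n-ary partially associative algebra over a field K of characteristic zero. Then for every k ≥ 2 and every multilinear map φ ∈ C^k(V), ((φ • μ) • μ)(x_1,…,x_{k+2n−2}) = 2 Σ_{1 ≤ p ≤ q−n ≤ k−1} φ(x_1,…,x_{p−1}, μ(x_p,…,x_{p+n−1}), x_{p+n},…,x_{q−1}, μ(x_q,…,x_{q+n−1}), x_{q+n},…,x_{k+2n−2}), where the sum is over pairs of integers (p,q) with 1 ≤ p, p + n ≤ q and q ≤ k + n − 1. -/

import Mathlib

/-- The extension of a multilinear `k`-cochain on `V` to a function on sequences,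
using only the first `k` entries of the sequence. -/
def toCochain {K V : Type*} [Field K] [AddCommGroup V] [Module K V] {k : ℕ}
    (f : MultilinearMap K (fun _ : Fin k => V) V) : (ℕ → V) → V :=
  fun x => f fun j => x j.val

/-- The Gerstenhaber product of a `k`-cochain and an `l`-cochain (cochains are
represented as functions on sequences depending only on the first `k`, resp. `l`, entries;
sequences are `0`-indexed, so the sign `(-1)^{(i-1)(l-1)}` of the paper, `1 ≤ i ≤ k`,
becomes `(-1)^{i(l-1)}`, `0 ≤ i ≤ k-1`). -/
def gerst {V : Type*} [AddCommGroup V] (k l : ℕ) (f g : (ℕ → V) → V) : (ℕ → V) → V :=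
  fun x => ∑ i ∈ Finset.range k, ((-1 : ℤ) ^ (i * (l - 1))) •
    f fun j => if j < i then x j else if j = i then g (fun s => x (i + s)) else x (j + l - 1)

/-- A term of the sum appearing in Lemma 2: `φ` evaluated on the sequence `x` in which
two disjoint `μ`-windows have been inserted, at the (0-indexed) argument slots
`p < q` of `φ`; the window of the first `μ` starts at `x`-position `p` and the window of
the second `μ` starts at `x`-position `q + n - 1`.  (In the 1-indexed notation of the paper
this is `φ(x_1,…,x_{p-1}, μ(x_p,…,x_{p+n-1}), x_{p+n},…, μ(x_q,…,x_{q+n-1}), …, x_{k+2n-2})`.) -/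
def twoSub {V : Type*} (n : ℕ) (φ μ : (ℕ → V) → V) (p q : ℕ) : (ℕ → V) → V :=
  fun x => φ fun j =>
    if j < p then x j
    else if j = p then μ (fun s => x (p + s))
    else if j < q then x (j + n - 1)
    else if j = q then μ (fun s => x (j + n - 1 + s))
    else x (j + 2 * n - 2)


/-! Since `n - 1` is even, every sign in `(φ • μ) • μ` is `+1`, so it is the sum over `p < k`
and `i < k + n - 1` of `φ` with `μ` inserted at slot `p` of the sequence in which `μ` was
already inserted at position `i`. For `i < p` and for `i ≥ p + n` the two insertions are
disjoint, and each pair of disjoint slots arises once in each order, whence the factor `2`.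
For `p ≤ i < p + n` the inner `μ` lies inside the window of the outer one; by multilinearity
of `φ` in slot `p` these `n` terms add up to `φ` with `μ • μ = 0` in that slot. -/

open Finset

section Insertion

variable {V : Type*}

def insertAt (l i : ℕ) (g : (ℕ → V) → V) (x : ℕ → V) : ℕ → V :=
  fun j => if j < i then x j else if j = i then g (fun s => x (i + s)) else x (j + l - 1)

theorem gerst_apply_of_even [AddCommGroup V] {k l : ℕ} (hl : Even (l - 1))
    (f g : (ℕ → V) → V) (x : ℕ → V) :
    gerst k l f g x = ∑ i ∈ range k, f (insertAt l i g x) := by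
  refine sum_congr rfl fun i _ => ?_
  rw [(hl.mul_left i).neg_one_pow, one_smul]
  rfl

theorem insertAt_insertAt_of_lt {n i p : ℕ} (hn : 1 ≤ n) (hip : i < p)
    (f g : (ℕ → V) → V) (x : ℕ → V) :
    f (insertAt n p g (insertAt n i g x)) = twoSub n f g i p x := by
  unfold twoSub
  congr 1
  funext j
  simp only [insertAt]
  split_ifs <;> subst_vars <;> first
    | rfl
    | omega
    | (congr 1; omega)
    | (congr 1; funext s; split_ifs <;> first | omega | (congr 1; omega))

theorem insertAt_insertAt_of_lt_add {n p t : ℕ} (ht : t < n) (g : (ℕ → V) → V)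
    (x : ℕ → V) :
    insertAt n p g (insertAt n (p + t) g x)
      = insertAt (2 * n - 1) p (fun y => g (insertAt n t g y)) x := by
  funext j
  simp only [insertAt]
  split_ifs <;> subst_vars <;> first
    | rfl
    | omega
    | (congr 1; omega)
    | (congr 1; funext s; simp only [insertAt]; split_ifs <;> subst_vars <;> first
        | rfl
        | omega
        | (congr 1; omega)
        | (congr 1; funext r; congr 1; omega))

end Insertion

section Cochain

variable {K V : Type*} [Field K] [AddCommGroup V] [Module K V]

theorem toCochain_congr {k : ℕ} (f : MultilinearMap K (fun _ : Fin k => V) V)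
    {x y : ℕ → V} (h : ∀ j < k, x j = y j) : toCochain f x = toCochain f y :=
  congrArg f (funext fun j => h j j.isLt)

-- The argument sequence of the outer `μ` runs past the inner insertion, which
-- `toCochain μ` ignores.
theorem insertAt_insertAt_of_add_le {n p q : ℕ} (hn : 1 ≤ n) (hpq : p < q)
    (f : (ℕ → V) → V) (μ : MultilinearMap K (fun _ : Fin n => V) V) (x : ℕ → V) :
    f (insertAt n p (toCochain μ) (insertAt n (q + n - 1) (toCochain μ) x))
      = twoSub n f (toCochain μ) p q x := by
  unfold twoSub
  congr 1
  funext j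
  simp only [insertAt]
  split_ifs <;> subst_vars <;> first
    | rfl
    | omega
    | (congr 1; omega)
    | (apply toCochain_congr; intro s hs; split_ifs <;> first | rfl | omega)

theorem toCochain_insertAt_eq_update {k l p : ℕ} (hp : p < k)
    (φ : MultilinearMap K (fun _ : Fin k => V) V) (g : (ℕ → V) → V) (x : ℕ → V) :
    toCochain φ (insertAt l p g x)
      = φ (Function.update (fun j : Fin k => insertAt l p 0 x j) ⟨p, hp⟩
          (g fun s => x (p + s))) := by
  unfold toCochain
  congr 1
  funext j
  rcases eq_or_ne j ⟨p, hp⟩ with rfl | hj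
  · simp [insertAt]
  · rw [Function.update_of_ne hj]
    have : j.val ≠ p := fun h => hj (Fin.ext h)
    simp [insertAt, this]

theorem sum_toCochain_insertAt {ι : Type*} {k l p : ℕ} (hp : p < k)
    (φ : MultilinearMap K (fun _ : Fin k => V) V) (s : Finset ι) (g : ι → (ℕ → V) → V)
    (x : ℕ → V) :
    ∑ i ∈ s, toCochain φ (insertAt l p (g i) x)
      = toCochain φ (insertAt l p (∑ i ∈ s, g i) x) := by
  simp only [toCochain_insertAt_eq_update hp, Finset.sum_apply, φ.map_update_sum]

theorem toCochain_insertAt_zero {k l p : ℕ} (hp : p < k)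
    (φ : MultilinearMap K (fun _ : Fin k => V) V) (x : ℕ → V) :
    toCochain φ (insertAt l p 0 x) = 0 := by
  rw [toCochain_insertAt_eq_update hp]
  exact φ.map_update_zero _ _

theorem sum_toCochain_insertAt_nested_eq_zero {n k p : ℕ} (hn : Even (n - 1)) (hp : p < k)
    (φ : MultilinearMap K (fun _ : Fin k => V) V) (g : (ℕ → V) → V) (hg : gerst n n g g = 0)
    (x : ℕ → V) :
    ∑ t ∈ range n, toCochain φ (insertAt (2 * n - 1) p (fun y => g (insertAt n t g y)) x)
      = 0 := by
  have hsum : ∑ t ∈ range n, (fun y => g (insertAt n t g y)) = 0 := by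
    funext y
    simpa only [Finset.sum_apply, gerst_apply_of_even hn] using congrFun hg y
  rw [sum_toCochain_insertAt hp, hsum, toCochain_insertAt_zero hp]

theorem sum_insertAt_insertAt {n k p : ℕ} (hn : 1 ≤ n) (hp : p < k) (f : (ℕ → V) → V)
    (μ : MultilinearMap K (fun _ : Fin n => V) V) (x : ℕ → V) :
    ∑ i ∈ range (k + n - 1), f (insertAt n p (toCochain μ) (insertAt n i (toCochain μ) x))
      = ∑ i ∈ range p, twoSub n f (toCochain μ) i p x
        + ∑ t ∈ range n, f (insertAt (2 * n - 1) p
            (fun y => toCochain μ (insertAt n t (toCochain μ) y)) x)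
        + ∑ q ∈ Ico (p + 1) k, twoSub n f (toCochain μ) p q x := by
  rw [show k + n - 1 = p + n + (k - (p + 1)) by omega, sum_range_add, sum_range_add,
    sum_Ico_eq_sum_range]
  congr 1
  · congr 1
    · exact sum_congr rfl fun i hi => insertAt_insertAt_of_lt hn (mem_range.1 hi) f _ x
    · exact sum_congr rfl fun t ht => by rw [insertAt_insertAt_of_lt_add (mem_range.1 ht)]
  · refine sum_congr rfl fun r _ => ?_
    rw [show p + n + r = p + 1 + r + n - 1 by omega]
    exact insertAt_insertAt_of_add_le hn (by omega) f μ x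

end Cochain

theorem sum_range_sum_range_add_sum_Ico {M : Type*} [AddCommMonoid M] (k : ℕ)
    (F : ℕ → ℕ → M) :
    ∑ p ∈ range k, (∑ i ∈ range p, F i p + ∑ q ∈ Ico (p + 1) k, F p q)
      = 2 • ∑ q ∈ range k, ∑ p ∈ range q, F p q := by
  rw [sum_add_distrib, two_nsmul]
  congr 1
  refine sum_comm' fun p q => ?_
  simp only [mem_range, mem_Ico]
  omega

theorem gerst_phi_mu_mu_of_odd_general {K V : Type*} [Field K]
    [AddCommGroup V] [Module K V]
    (n : ℕ) (hn : Odd n)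
    (μ : MultilinearMap K (fun _ : Fin n => V) V)
    (hμ : gerst n n (toCochain μ) (toCochain μ) = 0)
    (k : ℕ)
    (φ : MultilinearMap K (fun _ : Fin k => V) V) :
    gerst (k + n - 1) n (gerst k n (toCochain φ) (toCochain μ)) (toCochain μ)
      = (2 : ℤ) • ∑ q ∈ Finset.range k, ∑ p ∈ Finset.range q,
          twoSub n (toCochain φ) (toCochain μ) p q := by
  have hev : Even (n - 1) := hn.tsub_odd odd_one
  funext x
  simp only [gerst_apply_of_even hev, Pi.smul_apply, Finset.sum_apply, two_zsmul, ← two_nsmul]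
  rw [sum_comm, ← sum_range_sum_range_add_sum_Ico]
  refine sum_congr rfl fun p hp => ?_
  rw [sum_insertAt_insertAt hn.pos (mem_range.1 hp),
    sum_toCochain_insertAt_nested_eq_zero hev (mem_range.1 hp) φ _ hμ, add_zero]

/-- if `n` is odd and `(V, μ)` is an `n`-ary partially associative algebra,
then for any `k`-cochain `φ` (`k ≥ 2`), `(φ • μ) • μ` equals twice the sum over pairs of
disjoint positions of the insertion of two copies of `μ` in the arguments of `φ`. -/
theorem gerst_phi_mu_mu_of_odd {K V : Type*} [Field K] [CharZero K]
    [AddCommGroup V] [Module K V]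
    (n : ℕ) (hn : Odd n) (hn' : 1 ≤ n)
    (μ : MultilinearMap K (fun _ : Fin n => V) V)
    (hμ : gerst n n (toCochain μ) (toCochain μ) = 0)
    (k : ℕ) (hk : 2 ≤ k)
    (φ : MultilinearMap K (fun _ : Fin k => V) V) :
    gerst (k + n - 1) n (gerst k n (toCochain φ) (toCochain μ)) (toCochain μ)
      = (2 : ℤ) • ∑ q ∈ Finset.range k, ∑ p ∈ Finset.range q,
          twoSub n (toCochain φ) (toCochain μ) p q :=
  gerst_phi_mu_mu_of_odd_general n hn μ hμ k φ
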